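/- If E(R) is projective as a right R-module, then E(R) is co-Kasch if and only if R is right self-injective. -/

import Mathlib

def IsCoKasch (R : Type*) [Ring R] (M : Type*) [AddCommGroup M] [Module R M] : Prop :=
  ∀ (K : Submodule R M) (S : Submodule R (M ⧸ K)), IsSimpleModule R S →
    ∃ f : M →ₗ[R] S, Function.Surjective f

/-- `E` with embedding `i` is an injective hull: `E` is injective and `i` is an
essential monomorphism. -/
def IsInjectiveHull (R : Type*) [Ring R] {S E : Type*} [AddCommGroup S] [Module R S]
    [AddCommGroup E] [Module R E] (i : S →ₗ[R] E) : Prop :=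
  Module.Injective R E ∧ Function.Injective i ∧
    ∀ N : Submodule R E, N ≠ ⊥ → N ⊓ LinearMap.range i ≠ ⊥

/-!
If `E(R)` is projective and co-Kasch, the trace ideal `T` of `E(R)` in `R` is all of `R`:
otherwise `T` lies in a maximal ideal `I`, the simple module `R/I` embeds in a quotient
of `E(R)`, and any surjection `E(R) → R/I` lifts by projectivity to a map `E(R) → R` with image
in `T ⊆ I`, so it is zero. Writing `1 = ∑ ψₖ(eₖ)` with `ψₖ : E(R) → R`, Baer's criterion for
`E(R)` transfers to `R`. Conversely, if `R` is self-injective then `R` is a direct summand of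
`E(R)`, so every simple (hence cyclic) module is an image of `E(R)`.
-/

open Function

section

variable {R : Type*} [Ring R] {M : Type*} [AddCommGroup M] [Module R M]

variable (R M) in
def Module.traceIdeal : Ideal R :=
  ⨆ f : M →ₗ[R] R, LinearMap.range f

theorem IsCoKasch.of_surjective (π : M →ₗ[R] R) (hπ : Surjective π) : IsCoKasch R M := by
  intro K S hS
  have := IsSimpleModule.nontrivial R S
  obtain ⟨s, hs⟩ := exists_ne (0 : S)
  exact ⟨LinearMap.toSpanSingleton R S s ∘ₗ π,
    (IsSimpleModule.toSpanSingleton_surjective R hs).comp hπ⟩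

theorem IsCoKasch.exists_surjective_of_injective (hM : IsCoKasch R M) {K : Submodule R M}
    {S : Type*} [AddCommGroup S] [Module R S] [IsSimpleModule R S] (j : S →ₗ[R] M ⧸ K)
    (hj : Injective j) : ∃ f : M →ₗ[R] S, Surjective f := by
  let e := LinearEquiv.ofInjective j hj
  have : IsSimpleModule R (LinearMap.range j) := IsSimpleModule.congr e.symm
  obtain ⟨f, hf⟩ := hM K (LinearMap.range j) this
  exact ⟨e.symm.toLinearMap ∘ₗ f, e.symm.surjective.comp hf⟩

theorem Submodule.mapQ_map_injective {N : Type*} [AddCommGroup N] [Module R N]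
    (p : Submodule R M) {i : M →ₗ[R] N} (hi : Injective i) :
    Injective (p.mapQ (p.map i) i (le_comap_map i p)) := by
  rw [← LinearMap.ker_eq_bot, ker_mapQ, comap_map_eq_of_injective hi, mkQ_map_self]

theorem Module.Projective.eq_zero_of_traceIdeal_le [Module.Projective R M] {I : Ideal R}
    (hI : Module.traceIdeal R M ≤ I) (f : M →ₗ[R] R ⧸ I) : f = 0 := by
  obtain ⟨g, rfl⟩ := Module.projective_lifting_property I.mkQ f I.mkQ_surjective
  ext x
  simpa using hI (Submodule.mem_iSup_of_mem g ⟨x, rfl⟩)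

theorem Module.traceIdeal_eq_top_of_isCoKasch [Module.Projective R M] (hM : IsCoKasch R M)
    {i : R →ₗ[R] M} (hi : Function.Injective i) : Module.traceIdeal R M = ⊤ := by
  by_contra hT
  obtain ⟨I, hImax, hTI⟩ := Ideal.exists_le_maximal _ hT
  have : IsSimpleModule R (R ⧸ I) := isSimpleModule_iff_isCoatom.mpr hImax.out
  obtain ⟨f, hf⟩ := hM.exists_surjective_of_injective _ (I.mapQ_map_injective hi)
  have := IsSimpleModule.nontrivial R (R ⧸ I)
  obtain ⟨x, hx⟩ := exists_ne (0 : R ⧸ I)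
  obtain ⟨e, rfl⟩ := hf x
  exact hx (by rw [Module.Projective.eq_zero_of_traceIdeal_le hTI f, LinearMap.zero_apply])

theorem Module.Baer.exists_extension_mul_of_mem_traceIdeal (hM : Module.Baer R M) {a : R}
    (ha : a ∈ Module.traceIdeal R M) (I : Ideal R) (g : I →ₗ[R] R) :
    ∃ g' : R →ₗ[R] R, ∀ (x : R) (mem : x ∈ I), g' x = g ⟨x, mem⟩ * a := by
  refine Submodule.iSup_induction (motive := fun a =>
    ∃ g' : R →ₗ[R] R, ∀ (x : R) (mem : x ∈ I), g' x = g ⟨x, mem⟩ * a) _ ha ?_ ?_ ?_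
  · rintro ψ _ ⟨e, rfl⟩
    obtain ⟨h, hh⟩ := hM I (g.smulRight e)
    exact ⟨ψ ∘ₗ h, fun x mem => by simp [hh x mem, smul_eq_mul]⟩
  · exact ⟨0, fun x _ => by simp⟩
  · rintro a b ⟨ga, hga⟩ ⟨gb, hgb⟩
    exact ⟨ga + gb, fun x mem => by simp [hga x mem, hgb x mem, mul_add]⟩

theorem Module.Baer.self_of_traceIdeal_eq_top (hM : Module.Baer R M)
    (hT : Module.traceIdeal R M = ⊤) : Module.Baer R R := fun I g => by
  obtain ⟨g', hg'⟩ := hM.exists_extension_mul_of_mem_traceIdeal (hT ▸ Submodule.mem_top) I g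
  exact ⟨g', fun x mem => by rw [hg' x mem, mul_one]⟩

end

/-- If `E(R)` is projective, then `E(R)` is co-Kasch iff `R` is
self-injective. -/
theorem stmt17 (R : Type u) [Ring R] (E : Type u) [AddCommGroup E] [Module R E]
    (i : R →ₗ[R] E) (hE : IsInjectiveHull R i) (hproj : Module.Projective R E) :
    IsCoKasch R E ↔ Module.Injective R R := by
  obtain ⟨hEinj, hi, -⟩ := hE
  refine ⟨fun hCK => ?_, fun hR => ?_⟩
  · exact ((Module.Baer.of_injective hEinj).self_of_traceIdeal_eq_top
      (Module.traceIdeal_eq_top_of_isCoKasch hCK hi)).injective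
  · obtain ⟨h, hh⟩ := hR.out i hi LinearMap.id
    exact IsCoKasch.of_surjective h fun r => ⟨i r, hh r⟩
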